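/- arXiv:1912.11071 — 2 statements merged into one kernel-verified Lean document; each statement's English description precedes it below -/
import Mathlib

section
/- Let x be a random vector in R^d whose distribution is L8-L2 hypercontractive with second moment matrix Σ. Then the operator norm of E[‖x‖^2 · x x^⊤] is at most L · Tr(Σ) · ‖Σ‖, where ‖Σ‖ is the spectral norm of Σ. -/
open MeasureTheory Matrix

/-- Spectral (operator) norm of a real matrix. -/
noncomputable def opNorm {d : ℕ} (A : Matrix (Fin d) (Fin d) ℝ) : ℝ :=
  ‖Matrix.toEuclideanCLM (𝕜 := ℝ) A‖

/-!
For a vector `v`, the quadratic form of `E[‖x‖² x xᵀ]` at `v` is `∑ₗ E[xₗ² ⟨v, x⟩²]`. Cauchy–Schwarz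
bounds each term by `(E[xₗ⁴] E[⟨v, x⟩⁴])^{1/2}`, and Cauchy–Schwarz again together with
hypercontractivity gives the `L⁴–L²` bound `E[⟨u, x⟩⁴] ≤ (E[⟨u, x⟩⁸])^{1/2} ≤ L E[⟨u, x⟩²]²`.
Hence the quadratic form is at most `L ∑ₗ Σₗₗ · vᵀΣv ≤ L Tr(Σ) ‖Σ‖ ‖v‖²`, and for a symmetric matrix
a bound on the quadratic form bounds the operator norm.
-/

open WithLp

section Moments
variable {Ω : Type*} [MeasurableSpace Ω] {μ : Measure Ω}

theorem sq_integral_mul_le_integral_sq_mul_integral_sq {f g : Ω → ℝ}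
    (hf : Integrable (fun ω => f ω ^ 2) μ) (hg : Integrable (fun ω => g ω ^ 2) μ) :
    (∫ ω, f ω * g ω ∂μ) ^ 2 ≤ (∫ ω, f ω ^ 2 ∂μ) * ∫ ω, g ω ^ 2 ∂μ := by
  by_cases hfg : Integrable (fun ω => f ω * g ω) μ
  swap
  · rw [integral_undef hfg, sq, zero_mul]
    exact mul_nonneg (integral_nonneg fun _ => sq_nonneg _) (integral_nonneg fun _ => sq_nonneg _)
  -- the quadratic `t ↦ ∫ (t f + g)²` is nonnegative, so its discriminant is not positive
  have hquad : ∀ t : ℝ, 0 ≤ (∫ ω, f ω ^ 2 ∂μ) * (t * t) + (2 * ∫ ω, f ω * g ω ∂μ) * t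
      + ∫ ω, g ω ^ 2 ∂μ := fun t => by
    have h : 0 ≤ ∫ ω, (t * t) * f ω ^ 2 + (2 * t) * (f ω * g ω) + g ω ^ 2 ∂μ :=
      integral_nonneg fun ω => le_of_le_of_eq (sq_nonneg (t * f ω + g ω)) (by ring)
    have hfirst : Integrable (fun ω => (t * t) * f ω ^ 2 + (2 * t) * (f ω * g ω)) μ :=
      (hf.const_mul _).add (hfg.const_mul _)
    rw [integral_add hfirst hg,
      integral_add (hf.const_mul _) (hfg.const_mul _), integral_const_mul,
      integral_const_mul] at h
    linarith
  have hdisc := discrim_le_zero hquad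
  rw [discrim] at hdisc
  linarith

theorem integral_pow_four_le_of_integral_pow_eight_le [IsProbabilityMeasure μ] {X : Ω → ℝ}
    {L : ℝ} (hL : 0 ≤ L) (h8 : Integrable (fun ω => X ω ^ 8) μ)
    (hX : ∫ ω, X ω ^ 8 ∂μ ≤ L ^ 2 * (∫ ω, X ω ^ 2 ∂μ) ^ 4) :
    ∫ ω, X ω ^ 4 ∂μ ≤ L * (∫ ω, X ω ^ 2 ∂μ) ^ 2 := by
  have hjensen := sq_integral_mul_le_integral_sq_mul_integral_sq (μ := μ) (f := fun ω => X ω ^ 4)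
    (g := fun _ => 1) (by simpa only [← pow_mul] using h8) (integrable_const _)
  simp only [mul_one, one_pow, integral_const, probReal_univ, smul_eq_mul, ← pow_mul] at hjensen
  refine le_of_pow_le_pow_left₀ two_ne_zero (by positivity) ?_
  calc (∫ ω, X ω ^ 4 ∂μ) ^ 2 ≤ ∫ ω, X ω ^ 8 ∂μ := hjensen
    _ ≤ L ^ 2 * (∫ ω, X ω ^ 2 ∂μ) ^ 4 := hX
    _ = (L * (∫ ω, X ω ^ 2 ∂μ) ^ 2) ^ 2 := by ring

theorem integral_sq_mul_sq_le_of_integral_pow_four_le {X Y : Ω → ℝ} {L : ℝ} (hL : 0 ≤ L)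
    (hX4 : Integrable (fun ω => X ω ^ 4) μ) (hY4 : Integrable (fun ω => Y ω ^ 4) μ)
    (hX : ∫ ω, X ω ^ 4 ∂μ ≤ L * (∫ ω, X ω ^ 2 ∂μ) ^ 2)
    (hY : ∫ ω, Y ω ^ 4 ∂μ ≤ L * (∫ ω, Y ω ^ 2 ∂μ) ^ 2) :
    ∫ ω, X ω ^ 2 * Y ω ^ 2 ∂μ ≤ L * (∫ ω, X ω ^ 2 ∂μ) * ∫ ω, Y ω ^ 2 ∂μ := by
  have hcs := sq_integral_mul_le_integral_sq_mul_integral_sq (μ := μ) (f := fun ω => X ω ^ 2)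
    (g := fun ω => Y ω ^ 2) (by simpa only [← pow_mul] using hX4)
    (by simpa only [← pow_mul] using hY4)
  simp only [← pow_mul] at hcs
  have hX2 : 0 ≤ ∫ ω, X ω ^ 2 ∂μ := integral_nonneg fun _ => sq_nonneg _
  have hY2 : 0 ≤ ∫ ω, Y ω ^ 2 ∂μ := integral_nonneg fun _ => sq_nonneg _
  refine le_of_pow_le_pow_left₀ two_ne_zero (by positivity) ?_
  calc (∫ ω, X ω ^ 2 * Y ω ^ 2 ∂μ) ^ 2 ≤ (∫ ω, X ω ^ 4 ∂μ) * ∫ ω, Y ω ^ 4 ∂μ := hcs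
    _ ≤ (L * (∫ ω, X ω ^ 2 ∂μ) ^ 2) * (L * (∫ ω, Y ω ^ 2 ∂μ) ^ 2) :=
      mul_le_mul hX hY (integral_nonneg fun _ => by positivity) (by positivity)
    _ = (L * (∫ ω, X ω ^ 2 ∂μ) * ∫ ω, Y ω ^ 2 ∂μ) ^ 2 := by ring

theorem MeasureTheory.Integrable.pow_of_le [IsFiniteMeasure μ] {f : Ω → ℝ} {m n : ℕ}
    (hf : AEStronglyMeasurable f μ) (hn : Integrable (fun ω => f ω ^ n) μ) (hn_even : Even n)
    (hmn : m ≤ n) : Integrable (fun ω => f ω ^ m) μ := by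
  refine ((integrable_const 1).add hn).mono' (hf.pow m) (ae_of_all _ fun ω => ?_)
  rw [Real.norm_eq_abs, abs_pow, Pi.add_apply, ← hn_even.pow_abs]
  rcases le_total |f ω| 1 with h | h
  · linarith [pow_le_one₀ (abs_nonneg (f ω)) h (n := m), pow_nonneg (abs_nonneg (f ω)) n]
  · linarith [pow_le_pow_right₀ h hmn]

theorem integrable_mul_of_integrable_sq {f g : Ω → ℝ} (hf : AEStronglyMeasurable f μ)
    (hg : AEStronglyMeasurable g μ) (hf2 : Integrable (fun ω => f ω ^ 2) μ)
    (hg2 : Integrable (fun ω => g ω ^ 2) μ) : Integrable (fun ω => f ω * g ω) μ :=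
  ((memLp_two_iff_integrable_sq hf).2 hf2).integrable_mul ((memLp_two_iff_integrable_sq hg).2 hg2)

end Moments

section RandomVector
variable {Ω : Type*} [MeasurableSpace Ω] {μ : Measure Ω} {n : Type*}

theorem isHermitian_of_integral_mul (F : Ω → ℝ) (x : Ω → n → ℝ) :
    (of fun i j => ∫ ω, F ω * (x ω i * x ω j) ∂μ).IsHermitian := by
  ext i j
  simp only [conjTranspose_apply, of_apply, star_trivial, mul_comm (x _ i)]

theorem integrable_mul_mul_of_forall_integrable_mul_sq [Fintype n] {F : Ω → ℝ} {x : Ω → n → ℝ}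
    (h : ∀ v, Integrable (fun ω => F ω * (v ⬝ᵥ x ω) ^ 2) μ) (i j : n) :
    Integrable (fun ω => F ω * (x ω i * x ω j)) μ := by
  classical
  -- polarization: `4 xᵢ xⱼ = (xᵢ + xⱼ)² - (xᵢ - xⱼ)²`
  refine (((h (Pi.single i 1 + Pi.single j 1)).sub (h (Pi.single i 1 - Pi.single j 1))).div_const
    4).congr (ae_of_all _ fun ω => ?_)
  simp only [Pi.sub_apply, add_dotProduct, sub_dotProduct, single_one_dotProduct]
  ring

theorem dotProduct_mulVec_integral_mul [Fintype n] {F : Ω → ℝ} {x : Ω → n → ℝ}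
    (h : ∀ v, Integrable (fun ω => F ω * (v ⬝ᵥ x ω) ^ 2) μ) (v : n → ℝ) :
    v ⬝ᵥ (of fun i j => ∫ ω, F ω * (x ω i * x ω j) ∂μ) *ᵥ v = ∫ ω, F ω * (v ⬝ᵥ x ω) ^ 2 ∂μ := by
  have hij := integrable_mul_mul_of_forall_integrable_mul_sq h
  calc v ⬝ᵥ (of fun i j => ∫ ω, F ω * (x ω i * x ω j) ∂μ) *ᵥ v
      = ∑ i, ∑ j, ∫ ω, v i * (F ω * (x ω i * x ω j) * v j) ∂μ := by
        simp only [dotProduct, mulVec, of_apply, Finset.mul_sum, integral_const_mul,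
          integral_mul_const]
    _ = ∫ ω, ∑ i, ∑ j, v i * (F ω * (x ω i * x ω j) * v j) ∂μ := by
        rw [integral_finsetSum _ fun i _ => integrable_finsetSum _ fun j _ =>
          ((hij i j).mul_const _).const_mul _]
        exact Finset.sum_congr rfl fun i _ => (integral_finsetSum _ fun j _ =>
          ((hij i j).mul_const _).const_mul _).symm
    _ = ∫ ω, F ω * (v ⬝ᵥ x ω) ^ 2 ∂μ := by
        refine integral_congr_ae (ae_of_all _ fun ω => ?_)
        dsimp only
        rw [sq, dotProduct, Finset.sum_mul_sum, Finset.mul_sum]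
        refine Finset.sum_congr rfl fun i _ => ?_
        rw [Finset.mul_sum]
        exact Finset.sum_congr rfl fun j _ => by ring

theorem integrable_sq_mul_sq_dotProduct [Fintype n] {x : Ω → n → ℝ}
    (hx : ∀ v, AEStronglyMeasurable (fun ω => v ⬝ᵥ x ω) μ)
    (h4 : ∀ v, Integrable (fun ω => (v ⬝ᵥ x ω) ^ 4) μ) (l : n) (v : n → ℝ) :
    Integrable (fun ω => x ω l ^ 2 * (v ⬝ᵥ x ω) ^ 2) μ := by
  classical
  simp only [← single_one_dotProduct l]
  exact integrable_mul_of_integrable_sq ((hx _).pow 2) ((hx v).pow 2)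
    (by simpa only [← pow_mul] using h4 _) (by simpa only [← pow_mul] using h4 v)

theorem integral_sum_sq_mul_sq_dotProduct_le [Fintype n] {x : Ω → n → ℝ} {L : ℝ} (hL : 0 ≤ L)
    (hx : ∀ v, AEStronglyMeasurable (fun ω => v ⬝ᵥ x ω) μ)
    (h4 : ∀ v, Integrable (fun ω => (v ⬝ᵥ x ω) ^ 4) μ)
    (hL4 : ∀ v, ∫ ω, (v ⬝ᵥ x ω) ^ 4 ∂μ ≤ L * (∫ ω, (v ⬝ᵥ x ω) ^ 2 ∂μ) ^ 2) (v : n → ℝ) :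
    ∫ ω, (∑ l, x ω l ^ 2) * (v ⬝ᵥ x ω) ^ 2 ∂μ ≤
      L * (∑ l, ∫ ω, x ω l ^ 2 ∂μ) * ∫ ω, (v ⬝ᵥ x ω) ^ 2 ∂μ := by
  classical
  simp only [Finset.sum_mul, Finset.mul_sum]
  rw [integral_finsetSum _ fun l _ => integrable_sq_mul_sq_dotProduct hx h4 l v]
  refine Finset.sum_le_sum fun l _ => ?_
  simp only [← single_one_dotProduct l]
  exact integral_sq_mul_sq_le_of_integral_pow_four_le hL (h4 _) (h4 v) (hL4 _) (hL4 v)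

end RandomVector

theorem EuclideanSpace.real_norm_sq_eq_dotProduct {n : Type*} [Fintype n]
    (v : EuclideanSpace ℝ n) : ‖v‖ ^ 2 = ofLp v ⬝ᵥ ofLp v := by
  rw [← real_inner_self_eq_norm_sq, EuclideanSpace.inner_eq_star_dotProduct, star_trivial]

namespace Matrix
variable {n : Type*} [Fintype n] [DecidableEq n]

theorem dotProduct_mulVec_le_norm_toEuclideanCLM_mul (A : Matrix n n ℝ) (v : n → ℝ) :
    v ⬝ᵥ A *ᵥ v ≤ ‖toEuclideanCLM (𝕜 := ℝ) A‖ * (v ⬝ᵥ v) := by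
  have h := (real_inner_le_norm (toLp 2 v) (toEuclideanCLM (𝕜 := ℝ) A (toLp 2 v))).trans
    (mul_le_mul_of_nonneg_left ((toEuclideanCLM (𝕜 := ℝ) A).le_opNorm (toLp 2 v)) (norm_nonneg _))
  rwa [inner_toEuclideanCLM, mul_left_comm, ← sq, EuclideanSpace.real_norm_sq_eq_dotProduct] at h

theorem norm_toEuclideanCLM_le_of_abs_dotProduct_mulVec_le {A : Matrix n n ℝ}
    (hA : A.IsHermitian) {C : ℝ} (hC : 0 ≤ C) (h : ∀ v, |v ⬝ᵥ A *ᵥ v| ≤ C * (v ⬝ᵥ v)) :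
    ‖toEuclideanCLM (𝕜 := ℝ) A‖ ≤ C := by
  rw [(toEuclideanCLM (𝕜 := ℝ) A).norm_eq_iSup_rayleighQuotient
    (isSymmetric_toEuclideanLin_iff.mpr hA)]
  refine ciSup_le fun v => ?_
  rw [ContinuousLinearMap.rayleighQuotient, ContinuousLinearMap.reApplyInnerSelf_apply,
    RCLike.re_to_real, real_inner_comm, inner_toEuclideanCLM, abs_div, abs_sq,
    EuclideanSpace.real_norm_sq_eq_dotProduct]
  exact div_le_of_le_mul₀ (dotProduct_self_star_nonneg _) hC (h (ofLp v))

end Matrix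

/-- If `x` is L8-L2 hypercontractive with second moment matrix `Σ`, then
`‖E[‖x‖² x xᵀ]‖ ≤ L · Tr(Σ) · ‖Σ‖` in spectral norm. -/
theorem stmt2 {Ω : Type*} [MeasurableSpace Ω] (μ : Measure Ω) [IsProbabilityMeasure μ]
    {d : ℕ} (x : Ω → Fin d → ℝ) (L : ℝ) (hL : 0 < L)
    (hxm : ∀ i, AEMeasurable (fun ω => x ω i) μ)
    (hint : ∀ v : Fin d → ℝ, Integrable (fun ω => (∑ i, v i * x ω i) ^ 8) μ)
    (hmom : ∀ v : Fin d → ℝ,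
      ∫ ω, (∑ i, v i * x ω i) ^ 8 ∂μ ≤ L ^ 2 * (∫ ω, (∑ i, v i * x ω i) ^ 2 ∂μ) ^ 4) :
    opNorm (Matrix.of fun i j => ∫ ω, (∑ l, x ω l ^ 2) * (x ω i * x ω j) ∂μ) ≤
      L * (Matrix.of fun i j => ∫ ω, x ω i * x ω j ∂μ).trace *
        opNorm (Matrix.of fun i j => ∫ ω, x ω i * x ω j ∂μ) := by
  have hmeas : ∀ v : Fin d → ℝ, AEStronglyMeasurable (fun ω => v ⬝ᵥ x ω) μ := fun v =>
    (Finset.aemeasurable_fun_sum _ fun i _ => (hxm i).const_mul (v i)).aestronglyMeasurable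
  have h4 : ∀ v : Fin d → ℝ, Integrable (fun ω => (v ⬝ᵥ x ω) ^ 4) μ := fun v =>
    (hint v).pow_of_le (hmeas v) (by decide) (by norm_num)
  have hL4 : ∀ v : Fin d → ℝ, ∫ ω, (v ⬝ᵥ x ω) ^ 4 ∂μ ≤ L * (∫ ω, (v ⬝ᵥ x ω) ^ 2 ∂μ) ^ 2 :=
    fun v => integral_pow_four_le_of_integral_pow_eight_le hL.le (hint v) (hmom v)
  have hS : ∀ v, v ⬝ᵥ (of fun i j => ∫ ω, x ω i * x ω j ∂μ) *ᵥ v = ∫ ω, (v ⬝ᵥ x ω) ^ 2 ∂μ := by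
    simpa only [one_mul] using dotProduct_mulVec_integral_mul (F := fun _ => 1) (x := x)
      fun v => by simpa only [one_mul] using (hint v).pow_of_le (hmeas v) (by decide) (by norm_num)
  have hM := dotProduct_mulVec_integral_mul (F := fun ω => ∑ l, x ω l ^ 2) (x := x) fun v => by
    simpa only [Finset.sum_mul] using
      integrable_finsetSum _ fun l _ => integrable_sq_mul_sq_dotProduct hmeas h4 l v
  have htr : (of fun i j => ∫ ω, x ω i * x ω j ∂μ).trace = ∑ l, ∫ ω, x ω l ^ 2 ∂μ := by
    simp only [trace, diag_apply, of_apply, sq]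
  have htr_nonneg : 0 ≤ ∑ l, ∫ ω, x ω l ^ 2 ∂μ :=
    Finset.sum_nonneg fun l _ => integral_nonneg fun ω => sq_nonneg _
  rw [opNorm, opNorm, htr]
  refine norm_toEuclideanCLM_le_of_abs_dotProduct_mulVec_le
    (isHermitian_of_integral_mul _ x) (by positivity) fun v => ?_
  rw [hM, abs_of_nonneg (integral_nonneg fun ω => by positivity)]
  calc ∫ ω, (∑ l, x ω l ^ 2) * (v ⬝ᵥ x ω) ^ 2 ∂μ
      ≤ L * (∑ l, ∫ ω, x ω l ^ 2 ∂μ) * ∫ ω, (v ⬝ᵥ x ω) ^ 2 ∂μ :=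
        integral_sum_sq_mul_sq_dotProduct_le hL.le hmeas h4 hL4 v
    _ ≤ L * (∑ l, ∫ ω, x ω l ^ 2 ∂μ) *
          (‖toEuclideanCLM (𝕜 := ℝ) (of fun i j => ∫ ω, x ω i * x ω j ∂μ)‖ * (v ⬝ᵥ v)) := by
        rw [← hS]
        gcongr
        exact dotProduct_mulVec_le_norm_toEuclideanCLM_mul _ v
    _ = _ := by ring
end

section
/- There is a universal constant c > 0 such that for any even t ∈ N with t·λ·m^{1/2}/d^{1/4} ≤ c, the sum over multi-indices α of total degree exactly t of the squared planted Hermite coefficients in the single-spike block mixture model is at most (C λ t / d)^t · d^{3t/4} · m^{t/2} for some universal constant C; summing over degrees 2,4,…,t shows Σ_{0 < |α| ≤ t} (E[H_α(y)])² ≤ O(t λ m^{1/2} / d^{1/4}). -/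
/-!
On a super-even multi-index `α` of degree `s = 4q` the squared coefficient is
`(λ/d)^s ∏_j ((r_j - 1)‼)²`, where `r` and `c` are the row (sample) and column (coordinate)
degree vectors of `α`. There are at most `d^q m^{2q}` admissible `r` (halve the entries, then
distribute `q` units of four over the blocks) and at most `d^{2q}` admissible `c`. Given `r` and
`c`, row `j` is a composition of `r_j` supported on the at most `s` columns where `c ≠ 0`;
there are at most `C(s + r_j - 1, r_j)` of them, and
`C(s + r_j - 1, r_j) ((r_j - 1)‼)² ≤ (2s)^{r_j}` because `((n - 1)‼)² ≤ n!`. Hence the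
degree-`s` mass is at most `(2 s λ √m / d^{1/4})^s`, which is geometric in `s ≤ t` once
`t λ √m / d^{1/4} ≤ 1/4`.
-/

open scoped Nat

/-- The planted Hermite coefficient `E[H_α(y)]` of the single-spike block mixture:
nonzero only on 'super-even' multi-indices (each block degree divisible by 4, each
sample degree even, each coordinate-row degree even), where it equals
`(λ/d)^{|α|/2} ∏_j (|α_j| − 1)‼`.  Samples are indexed by `Fin d × Fin m`
(block, position). -/
noncomputable def spikeCoef (d m : ℕ) (lam : ℝ) (α : Fin d × Fin m → Fin d → ℕ) : ℝ :=
  if (∀ b : Fin d, 4 ∣ ∑ l : Fin m, ∑ i, α (b, l) i) ∧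
      (∀ j : Fin d × Fin m, Even (∑ i, α j i)) ∧
      (∀ i : Fin d, Even (∑ j, α j i)) then
    (lam / d) ^ ((∑ j, ∑ i, α j i) / 2) *
      ∏ j, (Nat.doubleFactorial (∑ i, α j i - 1) : ℝ)
  else 0

open Finset

lemma Finset.sum_biUnion_le_sum_sum {ι α : Type*} [DecidableEq α] (s : Finset ι)
    (t : ι → Finset α) (f : α → ℕ) : ∑ x ∈ s.biUnion t, f x ≤ ∑ i ∈ s, ∑ x ∈ t i, f x := by
  have h : s.biUnion t = (s.sigma t).image Sigma.snd := by ext; simp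
  rw [h]
  exact (sum_image_le_of_nonneg fun _ _ => Nat.zero_le _).trans_eq (sum_sigma s t fun x => f x.2)

lemma Nat.sq_doubleFactorial_pred_le_factorial : ∀ n : ℕ, (n - 1)‼ ^ 2 ≤ n !
  | 0 | 1 => le_rfl
  | n + 2 => by
    have ih := sq_doubleFactorial_pred_le_factorial n
    rw [show n + 2 - 1 = n + 1 by omega, doubleFactorial_add_one, factorial_succ, factorial_succ,
      mul_pow]
    have := Nat.mul_le_mul_left ((n + 1) ^ 2) ih
    nlinarith

section Counting

variable {ι κ : Type*} [DecidableEq κ]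

lemma card_piAntidiag_le_pow (S : Finset κ) (n : ℕ) : #(piAntidiag S n) ≤ #S ^ n :=
  calc #(piAntidiag S n) = ∑ _f ∈ piAntidiag S n, 1 := card_eq_sum_ones _
    _ ≤ ∑ f ∈ piAntidiag S n, Nat.multinomial S f :=
      sum_le_sum fun _ _ => Nat.multinomial_pos _ _
    _ = #S ^ n := by simpa using (sum_pow_eq_sum_piAntidiag S (fun _ => (1 : ℕ)) n).symm

lemma card_piAntidiag_eq_choose (S : Finset κ) (n : ℕ) :
    #(piAntidiag S n) = (#S + n - 1).choose n := by
  rw [← card_finsuppAntidiag_nat_eq_choose, finsuppAntidiag, card_map, card_attach]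

lemma card_piAntidiag_mul_sq_doubleFactorial_le (S : Finset κ) (n : ℕ) :
    #(piAntidiag S n) * (n - 1)‼ ^ 2 ≤ (#S + n) ^ n :=
  calc #(piAntidiag S n) * (n - 1)‼ ^ 2 ≤ (#S + n - 1).choose n * n ! := by
        rw [card_piAntidiag_eq_choose]
        gcongr
        exact Nat.sq_doubleFactorial_pred_le_factorial n
    _ = (#S + n - 1).descFactorial n := by
        rw [Nat.descFactorial_eq_factorial_mul_choose, mul_comm]
    _ ≤ (#S + n) ^ n :=
        (Nat.descFactorial_le_pow _ _).trans (Nat.pow_le_pow_left (Nat.sub_le _ _) _)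

variable [Fintype ι] [DecidableEq ι] [Fintype κ]

lemma sum_piFinset_piAntidiag_prod_sq_doubleFactorial_le (S : Finset κ) (a : ι → ℕ) :
    ∑ α ∈ Fintype.piFinset fun j => piAntidiag S (a j), ∏ j, (∑ i, α j i - 1)‼ ^ 2 ≤
      ∏ j, (#S + a j) ^ a j := by
  rw [← prod_univ_sum (fun j => piAntidiag S (a j)) fun _ x => (∑ i, x i - 1)‼ ^ 2]
  gcongr with j
  have hrow : ∀ x ∈ piAntidiag S (a j), ∑ i, x i = a j := by
    intro x hx
    obtain ⟨hsum, hsupp⟩ := mem_piAntidiag.1 hx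
    rw [← hsum]
    exact (sum_subset (subset_univ S) fun i _ hi => by_contra fun h => hi (hsupp i h)).symm
  rw [sum_congr rfl fun x hx => by rw [hrow x hx], sum_const, smul_eq_mul]
  exact card_piAntidiag_mul_sq_doubleFactorial_le S (a j)

end Counting

section SuperEven

variable {β γ κ : Type*} [Fintype β] [Fintype γ] [Fintype κ]

def IsSuperEven (α : β × γ → κ → ℕ) : Prop :=
  (∀ b, 4 ∣ ∑ l, ∑ i, α (b, l) i) ∧ (∀ j, Even (∑ i, α j i)) ∧ ∀ i, Even (∑ j, α j i)

lemma IsSuperEven.four_dvd_degree {α : β × γ → κ → ℕ} (h : IsSuperEven α) :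
    4 ∣ ∑ j, ∑ i, α j i := by
  rw [Fintype.sum_prod_type]
  exact dvd_sum fun b _ => h.1 b

variable [DecidableEq β] [DecidableEq γ] [DecidableEq κ]

variable (κ) in
def evenAntidiag (k : ℕ) : Finset (κ → ℕ) := {c ∈ piAntidiag univ (2 * k) | ∀ i, 2 ∣ c i}

lemma card_evenAntidiag_le (k : ℕ) : #(evenAntidiag κ k) ≤ Fintype.card κ ^ k := by
  rw [evenAntidiag, ← map_nsmul_piAntidiag_univ k two_ne_zero, card_map]
  exact card_piAntidiag_le_pow univ k

variable (β γ) in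
def blockAntidiag (q : ℕ) : Finset (β × γ → ℕ) :=
  {a ∈ piAntidiag univ (4 * q) | (∀ j, 2 ∣ a j) ∧ ∀ b, 4 ∣ ∑ l, a (b, l)}

lemma card_blockAntidiag_le (q : ℕ) :
    #(blockAntidiag β γ q) ≤ Fintype.card β ^ q * Fintype.card γ ^ (2 * q) := by
  have hsub : blockAntidiag β γ q ⊆ (piAntidiag univ q).biUnion fun u =>
      (Fintype.piFinset fun b => evenAntidiag γ (2 * u b)).image Function.uncurry := by
    intro a ha
    simp only [blockAntidiag, mem_filter, mem_piAntidiag, mem_univ, implies_true,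
      and_true] at ha
    obtain ⟨hsum, heven, hblock⟩ := ha
    simp only [mem_biUnion, mem_image, Fintype.mem_piFinset, evenAntidiag, mem_filter,
      mem_piAntidiag, mem_univ, implies_true, and_true]
    refine ⟨fun b => (∑ l, a (b, l)) / 4, ?_, Function.curry a, fun b => ⟨?_, fun l => heven _⟩,
      Function.uncurry_curry a⟩
    · rw [← Nat.sum_div fun b _ => hblock b, ← Fintype.sum_prod_type', hsum]
      omega
    · have := hblock b
      change ∑ l, a (b, l) = 2 * (2 * ((∑ l, a (b, l)) / 4))
      omega
  calc #(blockAntidiag β γ q)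
      ≤ ∑ u ∈ piAntidiag univ q,
          #((Fintype.piFinset fun b => evenAntidiag γ (2 * u b)).image Function.uncurry) :=
        (card_le_card hsub).trans card_biUnion_le
    _ ≤ ∑ _u ∈ piAntidiag (univ : Finset β) q, Fintype.card γ ^ (2 * q) := by
        refine sum_le_sum fun u hu => card_image_le.trans ?_
        rw [Fintype.card_piFinset, ← (mem_piAntidiag.1 hu).1, mul_sum, ← prod_pow_eq_pow_sum]
        exact prod_le_prod' fun b _ => card_evenAntidiag_le _
    _ ≤ Fintype.card β ^ q * Fintype.card γ ^ (2 * q) := by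
        rw [sum_const, smul_eq_mul]
        gcongr
        exact card_piAntidiag_le_pow univ q

variable (β γ κ) in
def superEvenCandidates (q : ℕ) : Finset (β × γ → κ → ℕ) :=
  (blockAntidiag β γ q ×ˢ evenAntidiag κ (2 * q)).biUnion fun p =>
    Fintype.piFinset fun j => piAntidiag {i | p.2 i ≠ 0} (p.1 j)

lemma IsSuperEven.mem_superEvenCandidates {α : β × γ → κ → ℕ} {q : ℕ} (h : IsSuperEven α)
    (hdeg : ∑ j, ∑ i, α j i = 4 * q) : α ∈ superEvenCandidates β γ κ q := by
  have hcol : ∀ j i, α j i ≠ 0 → ∑ j', α j' i ≠ 0 := fun j i hji =>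
    (Nat.pos_of_ne_zero hji |>.trans_le (single_le_sum (f := fun j' => α j' i)
      (fun _ _ => Nat.zero_le _) (mem_univ j))).ne'
  simp only [superEvenCandidates, mem_biUnion, mem_product, Prod.exists, blockAntidiag,
    evenAntidiag, mem_filter, mem_piAntidiag, mem_univ, implies_true, and_true,
    Fintype.mem_piFinset, ← even_iff_two_dvd]
  refine ⟨fun j => ∑ i, α j i, fun i => ∑ j, α j i, ⟨⟨hdeg, h.2.1, h.1⟩, ?_, h.2.2⟩,
    fun j => ⟨sum_filter_of_ne fun i _ => hcol j i, fun i hi => by simpa using hcol j i hi⟩⟩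
  rw [sum_comm, hdeg]
  ring

variable (β γ κ) in
lemma sum_superEvenCandidates_prod_sq_doubleFactorial_le (q : ℕ) :
    ∑ α ∈ superEvenCandidates β γ κ q, ∏ j, (∑ i, α j i - 1)‼ ^ 2 ≤
      Fintype.card β ^ q * Fintype.card γ ^ (2 * q) * Fintype.card κ ^ (2 * q) *
        (8 * q) ^ (4 * q) := by
  have hfibre : ∀ p ∈ blockAntidiag β γ q ×ˢ evenAntidiag κ (2 * q),
      ∑ α ∈ Fintype.piFinset (fun j => piAntidiag {i | p.2 i ≠ 0} (p.1 j)),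
        ∏ j, (∑ i, α j i - 1)‼ ^ 2 ≤ (8 * q) ^ (4 * q) := by
    rintro ⟨a, c⟩ hp
    simp only [mem_product, blockAntidiag, evenAntidiag, mem_filter, mem_piAntidiag, mem_univ,
      implies_true, and_true] at hp
    obtain ⟨⟨ha, -⟩, hc, -⟩ := hp
    have hS : #{i | c i ≠ 0} ≤ 4 * q := by
      calc #{i | c i ≠ 0} = #{i | c i ≠ 0} • 1 := by rw [smul_eq_mul, mul_one]
        _ ≤ ∑ i ∈ {i | c i ≠ 0}, c i :=
          card_nsmul_le_sum _ _ _ fun i hi => Nat.one_le_iff_ne_zero.2 (mem_filter.1 hi).2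
        _ ≤ ∑ i, c i := sum_le_sum_of_subset (subset_univ _)
        _ = 4 * q := by rw [hc]; ring
    have hrow : ∀ j, a j ≤ 4 * q := fun j =>
      ha ▸ single_le_sum (fun _ _ => Nat.zero_le _) (mem_univ j)
    calc _ ≤ ∏ j, (#{i | c i ≠ 0} + a j) ^ a j :=
          sum_piFinset_piAntidiag_prod_sq_doubleFactorial_le _ a
      _ ≤ ∏ j, (8 * q) ^ a j := prod_le_prod' fun j _ => by gcongr; linarith [hrow j]
      _ = (8 * q) ^ (4 * q) := by rw [prod_pow_eq_pow_sum, ha]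
  calc _ ≤ ∑ p ∈ blockAntidiag β γ q ×ˢ evenAntidiag κ (2 * q),
        ∑ α ∈ Fintype.piFinset (fun j => piAntidiag {i | p.2 i ≠ 0} (p.1 j)),
          ∏ j, (∑ i, α j i - 1)‼ ^ 2 := by
        rw [superEvenCandidates]
        exact sum_biUnion_le_sum_sum _ _ _
    _ ≤ #(blockAntidiag β γ q ×ˢ evenAntidiag κ (2 * q)) * (8 * q) ^ (4 * q) :=
        (sum_le_sum hfibre).trans_eq (by rw [sum_const, smul_eq_mul])
    _ ≤ _ := by
        rw [card_product]
        exact Nat.mul_le_mul_right _ (Nat.mul_le_mul (card_blockAntidiag_le q)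
          (card_evenAntidiag_le _))

end SuperEven

section Spike

variable {d m : ℕ} {lam : ℝ} {α : Fin d × Fin m → Fin d → ℕ}

lemma isSuperEven_of_spikeCoef_ne_zero (h : spikeCoef d m lam α ≠ 0) : IsSuperEven α := by
  unfold spikeCoef at h
  split_ifs at h with hα
  · exact hα
  · exact absurd rfl h

lemma spikeCoef_sq_of_isSuperEven (h : IsSuperEven α) :
    spikeCoef d m lam α ^ 2 =
      (lam / d) ^ (∑ j, ∑ i, α j i) * ((∏ j, (∑ i, α j i - 1)‼ ^ 2 : ℕ) : ℝ) := by
  have hcoef : spikeCoef d m lam α =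
      (lam / d) ^ ((∑ j, ∑ i, α j i) / 2) * ∏ j, ((∑ i, α j i - 1)‼ : ℝ) := if_pos h
  have heven : 2 ∣ ∑ j, ∑ i, α j i := (show 2 ∣ 4 by norm_num).trans h.four_dvd_degree
  rw [hcoef, mul_pow, ← pow_mul, Nat.div_mul_cancel heven]
  push_cast
  rw [prod_pow]

variable (d m lam) in
noncomputable def degreeTerm (s : ℕ) (α : Fin d × Fin m → Fin d → ℕ) : ℝ :=
  if (∑ j, ∑ i, α j i) = s then spikeCoef d m lam α ^ 2 else 0

lemma degreeTerm_ne_zero {s : ℕ} (h : degreeTerm d m lam s α ≠ 0) :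
    IsSuperEven α ∧ ∑ j, ∑ i, α j i = s := by
  unfold degreeTerm at h
  split_ifs at h with hdeg
  · exact ⟨isSuperEven_of_spikeCoef_ne_zero (pow_ne_zero_iff two_ne_zero |>.1 h), hdeg⟩
  · exact absurd rfl h

lemma degreeTerm_eq_zero_of_notMem {s : ℕ}
    (hα : α ∉ superEvenCandidates (Fin d) (Fin m) (Fin d) (s / 4)) :
    degreeTerm d m lam s α = 0 := by
  by_contra h
  obtain ⟨hα', hdeg⟩ := degreeTerm_ne_zero h
  have := hα'.four_dvd_degree
  exact hα (hα'.mem_superEvenCandidates (by omega))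

lemma summable_degreeTerm (s : ℕ) : Summable (degreeTerm d m lam s) :=
  summable_of_ne_finset_zero fun _ => degreeTerm_eq_zero_of_notMem

lemma degreeTerm_le (hlam : 0 ≤ lam) (s : ℕ) (α : Fin d × Fin m → Fin d → ℕ) :
    degreeTerm d m lam s α ≤ (lam / d) ^ s * ((∏ j, (∑ i, α j i - 1)‼ ^ 2 : ℕ) : ℝ) := by
  by_cases h : degreeTerm d m lam s α = 0
  · rw [h]
    positivity
  obtain ⟨hα, hdeg⟩ := degreeTerm_ne_zero h
  rw [degreeTerm, if_pos hdeg, spikeCoef_sq_of_isSuperEven hα, hdeg]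

lemma tsum_degreeTerm_le (hd : 0 < d) (hlam : 0 ≤ lam) (s : ℕ) :
    ∑' α, degreeTerm d m lam s α ≤ (2 * s * lam * √m / (d : ℝ) ^ ((1 : ℝ) / 4)) ^ s := by
  by_cases hs : 4 ∣ s
  swap
  · have hzero : ∀ α, degreeTerm d m lam s α = 0 := fun α => by_contra fun h => by
      obtain ⟨hα, hdeg⟩ := degreeTerm_ne_zero h
      exact hs (hdeg ▸ hα.four_dvd_degree)
    simp only [hzero, tsum_zero]
    positivity
  obtain ⟨q, rfl⟩ := hs
  set x : ℝ := (d : ℝ) ^ ((1 : ℝ) / 4)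
  have hx : (d : ℝ) = x ^ 4 := by
    rw [← Real.rpow_natCast, ← Real.rpow_mul (Nat.cast_nonneg d)]
    norm_num
  have hx0 : 0 < x := by positivity
  have hcount := sum_superEvenCandidates_prod_sq_doubleFactorial_le (Fin d) (Fin m) (Fin d) q
  simp only [Fintype.card_fin] at hcount
  rw [tsum_eq_sum fun _ => degreeTerm_eq_zero_of_notMem, Nat.mul_div_cancel_left _ four_pos]
  calc ∑ α ∈ superEvenCandidates (Fin d) (Fin m) (Fin d) q, degreeTerm d m lam (4 * q) α
      ≤ ∑ α ∈ superEvenCandidates (Fin d) (Fin m) (Fin d) q,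
          (lam / d) ^ (4 * q) * ((∏ j, (∑ i, α j i - 1)‼ ^ 2 : ℕ) : ℝ) :=
        sum_le_sum fun α _ => degreeTerm_le hlam _ α
    _ ≤ (lam / d) ^ (4 * q) *
          ((d ^ q * m ^ (2 * q) * d ^ (2 * q) * (8 * q) ^ (4 * q) : ℕ) : ℝ) := by
        rw [← mul_sum, ← Nat.cast_sum]
        gcongr
    _ = (lam / x ^ 4 * (x ^ 3 * √m * (8 * q))) ^ (4 * q) := by
        have hm : (m : ℝ) ^ (2 * q) = √m ^ (4 * q) := by
          rw [← Real.sq_sqrt (Nat.cast_nonneg m), ← pow_mul, Real.sqrt_sq (Real.sqrt_nonneg _)]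
          ring_nf
        push_cast
        rw [hm, hx]
        ring
    _ = (2 * ↑(4 * q) * lam * √m / x) ^ (4 * q) := by
        congr 1
        push_cast
        field_simp
        ring

end Spike

lemma div_pow_mul_rpow_eq_pow {d m : ℝ} (hd : 0 < d) (hm : 0 ≤ m) (K : ℝ) (t : ℕ) :
    (K / d) ^ t * d ^ (3 * (t : ℝ) / 4) * m ^ ((t : ℝ) / 2) =
      (K * √m / d ^ ((1 : ℝ) / 4)) ^ t := by
  set x := d ^ ((1 : ℝ) / 4)
  have hx0 : 0 < x := by positivity
  have hx : d = x ^ 4 := by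
    rw [← Real.rpow_natCast, ← Real.rpow_mul hd.le]
    norm_num
  have hd3 : d ^ (3 * (t : ℝ) / 4) = x ^ (3 * t) := by
    rw [← Real.rpow_natCast, ← Real.rpow_mul hd.le]
    push_cast
    ring_nf
  have hm2 : m ^ ((t : ℝ) / 2) = √m ^ t := by
    rw [Real.sqrt_eq_rpow, ← Real.rpow_natCast, ← Real.rpow_mul hm]
    ring_nf
  rw [hd3, hm2, hx, div_pow, div_pow, mul_pow, ← pow_mul]
  field_simp
  ring

lemma sum_Icc_pow_le_two_mul {y : ℝ} (h0 : 0 ≤ y) (h1 : y ≤ 1 / 2) (t : ℕ) :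
    ∑ s ∈ Icc 1 t, y ^ s ≤ 2 * y :=
  calc ∑ s ∈ Icc 1 t, y ^ s = ∑ s ∈ Ico 1 (t + 1), y ^ s := by rw [Ico_add_one_right_eq_Icc]
    _ ≤ y ^ 1 / (1 - y) := geom_sum_Ico_le_of_lt_one h0 (by linarith)
    _ ≤ 2 * y := by
        rw [pow_one, div_le_iff₀ (by linarith)]
        nlinarith

/-- Low-degree lower bound for single-spike block mixtures: there are universal constants
`c, C > 0` such that whenever `t` is even and `t λ √m / d^{1/4} ≤ c`, the sum of squared
planted Hermite coefficients over multi-indices of total degree exactly `t` is at most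
`(C λ t / d)^t d^{3t/4} m^{t/2}`, and summing over degrees `0 < |α| ≤ t` gives at most
`C t λ √m / d^{1/4}`. -/
theorem stmt15 :
    ∃ c C : ℝ, 0 < c ∧ 0 < C ∧
      ∀ (d m : ℕ) (lam : ℝ) (t : ℕ), 0 < d → 0 < m → 0 < lam → lam < 1 → Even t →
        (t : ℝ) * lam * Real.sqrt m / (d : ℝ) ^ ((1 : ℝ) / 4) ≤ c →
        ((∑' α : Fin d × Fin m → Fin d → ℕ,
            (if (∑ j, ∑ i, α j i) = t then spikeCoef d m lam α ^ 2 else 0)) ≤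
          (C * lam * t / d) ^ t * (d : ℝ) ^ (3 * (t : ℝ) / 4) * (m : ℝ) ^ ((t : ℝ) / 2)) ∧
        ((∑' α : Fin d × Fin m → Fin d → ℕ,
            (if 0 < (∑ j, ∑ i, α j i) ∧ (∑ j, ∑ i, α j i) ≤ t then
              spikeCoef d m lam α ^ 2 else 0)) ≤
          C * t * lam * Real.sqrt m / (d : ℝ) ^ ((1 : ℝ) / 4)) := by
  refine ⟨1 / 4, 4, by norm_num, by norm_num, fun d m lam t hd _ hlam _ _ hsmall => ?_⟩
  set x := (d : ℝ) ^ ((1 : ℝ) / 4)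
  set r := t * lam * √m / x
  have hdegree : ∀ s ≤ t, ∑' α, degreeTerm d m lam s α ≤ (2 * r) ^ s := fun s hs =>
    (tsum_degreeTerm_le hd hlam.le s).trans (pow_le_pow_left₀ (by positivity) (by
      rw [show 2 * r = 2 * t * lam * √m / x by ring]
      gcongr) s)
  refine ⟨?_, ?_⟩
  · rw [div_pow_mul_rpow_eq_pow (by positivity) (Nat.cast_nonneg m)]
    refine (hdegree t le_rfl).trans (pow_le_pow_left₀ (by positivity) ?_ t)
    rw [show 2 * r = 2 * lam * t * √m / x by ring]
    gcongr
    norm_num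
  · have hsplit : ∀ α : Fin d × Fin m → Fin d → ℕ,
        (if 0 < (∑ j, ∑ i, α j i) ∧ (∑ j, ∑ i, α j i) ≤ t then
          spikeCoef d m lam α ^ 2 else 0) = ∑ s ∈ Icc 1 t, degreeTerm d m lam s α := fun α => by
      simp only [degreeTerm, sum_ite_eq, mem_Icc, Nat.one_le_iff_ne_zero, Nat.pos_iff_ne_zero]
    simp_rw [hsplit]
    rw [Summable.tsum_finsetSum fun s _ => summable_degreeTerm s]
    calc ∑ s ∈ Icc 1 t, ∑' α, degreeTerm d m lam s α ≤ ∑ s ∈ Icc 1 t, (2 * r) ^ s :=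
          sum_le_sum fun s hs => hdegree s (mem_Icc.1 hs).2
      _ ≤ 2 * (2 * r) := sum_Icc_pow_le_two_mul (by positivity) (by linarith) t
      _ = 4 * t * lam * √m / x := by ring
end
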